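/- arXiv:2604.10777 — 2 statements merged into one kernel-verified Lean document; each statement's English description precedes it below -/
import Mathlib

section
/- Fix n : ℕ, let E = EuclideanSpace ℝ (Fin n) with standard orthonormal basis e i, and define for a differentiable vector field F : E → E its divergence div F x = ∑ i, ⟪fderiv ℝ F x (e i), e i⟫, and for a C² function q : E → ℝ its Laplacian Δq x = ∑ i, fderiv ℝ (fun y => fderiv ℝ q y (e i)) x (e i). Let p : ℝ → E → ℝ be smooth with p t x > 0 for all t ∈ [0,1] and x ∈ E, let b : ℝ → E → E be a smooth drift, let ε : ℝ → ℝ, and define the score s t x = gradient (fun y => Real.log (p t y)) x and the forward drift b_F t x = b t x + ε t • s t x. If for all t ∈ [0,1] and all x the forward Fokker–Planck equation holds, i.e. deriv (fun τ => p τ x) t + div (fun y => p t y • b_F t y) x = ε t * Δ (p t) x, then for all t ∈ [0,1] and all x the continuity equation holds: deriv (fun τ => p τ x) t + div (fun y => p t y • b t y) x = 0. -/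
open scoped RealInnerProductSpace

/-- Coordinatewise divergence of a vector field on `EuclideanSpace ℝ (Fin n)`
with respect to the standard orthonormal basis. -/
noncomputable def ediv {n : ℕ} (F : EuclideanSpace ℝ (Fin n) → EuclideanSpace ℝ (Fin n))
    (x : EuclideanSpace ℝ (Fin n)) : ℝ :=
  ∑ i, ⟪fderiv ℝ F x (EuclideanSpace.basisFun (Fin n) ℝ i),
        EuclideanSpace.basisFun (Fin n) ℝ i⟫

/-- Coordinatewise Laplacian of a scalar function on `EuclideanSpace ℝ (Fin n)`
with respect to the standard orthonormal basis. -/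
noncomputable def elap {n : ℕ} (q : EuclideanSpace ℝ (Fin n) → ℝ)
    (x : EuclideanSpace ℝ (Fin n)) : ℝ :=
  ∑ i, fderiv ℝ (fun y => fderiv ℝ q y (EuclideanSpace.basisFun (Fin n) ℝ i)) x
        (EuclideanSpace.basisFun (Fin n) ℝ i)

/-- Forward direction of Theorem 2.6: if the positive smooth density `p` solves
the forward Fokker–Planck equation with drift `b_F = b + ε • s`, where
`s t = ∇ log (p t)` is the score, then `p` solves the continuity equation
with drift `b`. -/
theorem stmt6 {n : ℕ} (p : ℝ → EuclideanSpace ℝ (Fin n) → ℝ)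
    (hp : ContDiff ℝ (⊤ : ℕ∞) (Function.uncurry p))
    (hpos : ∀ t ∈ Set.Icc (0 : ℝ) 1, ∀ x, 0 < p t x)
    (b : ℝ → EuclideanSpace ℝ (Fin n) → EuclideanSpace ℝ (Fin n))
    (hb : ContDiff ℝ (⊤ : ℕ∞) (Function.uncurry b))
    (ε : ℝ → ℝ)
    (s : ℝ → EuclideanSpace ℝ (Fin n) → EuclideanSpace ℝ (Fin n))
    (hs : ∀ t x, s t x = gradient (fun y => Real.log (p t y)) x)
    (bF : ℝ → EuclideanSpace ℝ (Fin n) → EuclideanSpace ℝ (Fin n))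
    (hbF : ∀ t x, bF t x = b t x + ε t • s t x)
    (hFP : ∀ t ∈ Set.Icc (0 : ℝ) 1, ∀ x,
      deriv (fun τ => p τ x) t + ediv (fun y => p t y • bF t y) x = ε t * elap (p t) x) :
    ∀ t ∈ Set.Icc (0 : ℝ) 1, ∀ x,
      deriv (fun τ => p τ x) t + ediv (fun y => p t y • b t y) x = 0 := by
  intro t ht x
  set e : Fin n → EuclideanSpace ℝ (Fin n) := fun i => EuclideanSpace.basisFun (Fin n) ℝ i with he
  -- smoothness of slices
  have hq : ContDiff ℝ (⊤ : ℕ∞) (p t) := by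
    have h0 : ContDiff ℝ (⊤ : ℕ∞) (fun y : EuclideanSpace ℝ (Fin n) => (t, y)) :=
      contDiff_const.prodMk contDiff_id
    exact hp.comp h0
  have hbt : ContDiff ℝ (⊤ : ℕ∞) (b t) := by
    have h0 : ContDiff ℝ (⊤ : ℕ∞) (fun y : EuclideanSpace ℝ (Fin n) => (t, y)) :=
      contDiff_const.prodMk contDiff_id
    exact hb.comp h0
  have hqd : Differentiable ℝ (p t) := hq.differentiable (by simp)
  -- the gradient field G of p t is smooth
  set G : EuclideanSpace ℝ (Fin n) → EuclideanSpace ℝ (Fin n) := fun y => gradient (p t) y with hG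
  have hGsm : ContDiff ℝ (⊤ : ℕ∞) G := by
    have h1 : ContDiff ℝ (⊤ : ℕ∞) (fderiv ℝ (p t)) := hq.fderiv_right (by simp)
    have h2 : G = (InnerProductSpace.toDual ℝ (EuclideanSpace ℝ (Fin n))).symm ∘ (fderiv ℝ (p t)) := rfl
    rw [h2]
    exact ((InnerProductSpace.toDual ℝ (EuclideanSpace ℝ (Fin n))).symm.toContinuousLinearEquiv.contDiff).comp h1
  have hGd : Differentiable ℝ G := hGsm.differentiable (by simp)
  -- p t y • s t y = G y
  have hps : ∀ y, p t y • s t y = G y := by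
    intro y
    have hy := (hpos t ht y).ne'
    have hlog : fderiv ℝ (fun z => Real.log (p t z)) y = (p t y)⁻¹ • fderiv ℝ (p t) y :=
      ((hqd y).hasFDerivAt.log hy).fderiv
    rw [hs, gradient, hlog, map_smul]
    rw [smul_smul, mul_inv_cancel₀ hy, one_smul]
    rfl
  -- function equality
  have hfun : (fun y => p t y • bF t y) = (fun y => p t y • b t y) + fun y => ε t • G y := by
    funext y
    simp only [hbF, Pi.add_apply, smul_add, ← hps y, smul_comm (p t y) (ε t)]
  -- differentiability of pieces
  have hF1 : Differentiable ℝ (fun y => p t y • b t y) :=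
    hqd.smul (hbt.differentiable (by simp))
  have hF2 : Differentiable ℝ (fun y => ε t • G y) := hGd.const_smul (ε t)
  -- split ediv
  have hsplit : ediv (fun y => p t y • bF t y) x
      = ediv (fun y => p t y • b t y) x + ε t * ∑ i, ⟪fderiv ℝ G x (e i), e i⟫ := by
    rw [hfun]
    unfold ediv
    rw [Finset.mul_sum, ← Finset.sum_add_distrib]
    refine Finset.sum_congr rfl fun i _ => ?_
    rw [fderiv_add (hF1 x) (hF2 x)]
    have : fderiv ℝ (fun y => ε t • G y) x = ε t • fderiv ℝ G x :=
      fderiv_const_smul (hGd x) (ε t)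
    rw [this]
    simp only [ContinuousLinearMap.add_apply, ContinuousLinearMap.coe_smul', Pi.smul_apply,
      inner_add_left, real_inner_smul_left]
    rfl
  -- second derivatives: ∑ ⟪fderiv G x (e i), e i⟫ = elap (p t) x
  have hlap : ∑ i, ⟪fderiv ℝ G x (e i), e i⟫ = elap (p t) x := by
    unfold elap
    refine Finset.sum_congr rfl fun i _ => ?_
    have hfe : (fun y => fderiv ℝ (p t) y (e i)) = fun y => ⟪(fun _ : EuclideanSpace ℝ (Fin n) => e i) y, G y⟫ := by
      funext y
      rw [hG]
      simp only [gradient]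
      rw [real_inner_comm, InnerProductSpace.toDual_symm_apply]
    rw [hfe, fderiv_inner_apply ℝ (differentiableAt_const _) (hGd x) (e i)]
    simp [real_inner_comm, mul_comm]
  have := hFP t ht x
  rw [hsplit, hlap] at this
  linarith
end

section
/- Fix n : ℕ, let E = EuclideanSpace ℝ (Fin n) with standard orthonormal basis e i, and define for a differentiable vector field F : E → E its divergence div F x = ∑ i, ⟪fderiv ℝ F x (e i), e i⟫, and for a C² function q : E → ℝ its Laplacian Δq x = ∑ i, fderiv ℝ (fun y => fderiv ℝ q y (e i)) x (e i). Let p : ℝ → E → ℝ be smooth with p t x > 0 for all t ∈ [0,1] and x ∈ E, let b : ℝ → E → E be a smooth drift, let ε : ℝ → ℝ, and define the score s t x = gradient (fun y => Real.log (p t y)) x and the backward drift b_B t x = b t x - ε t • s t x. If for all t ∈ [0,1] and all x the continuity equation holds, i.e. deriv (fun τ => p τ x) t + div (fun y => p t y • b t y) x = 0, then for all t ∈ [0,1] and all x the backward Fokker–Planck equation holds: deriv (fun τ => p τ x) t + div (fun y => p t y • b_B t y) x = -(ε t) * Δ (p t) x. -/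
open scoped RealInnerProductSpace

section aux

variable {n : ℕ}

local notation "E" => EuclideanSpace ℝ (Fin n)

lemma inner_gradient_eq (f : E → ℝ) (x v : E) :
    ⟪gradient f x, v⟫ = fderiv ℝ f x v := by
  rw [gradient, InnerProductSpace.toDual_symm_apply]

/-- linearity of ediv for `F - c • G` -/
lemma ediv_sub_smul (F G : E → E) (c : ℝ) (x : E)
    (hF : DifferentiableAt ℝ F x) (hG : DifferentiableAt ℝ G x) :
    ediv (fun y => F y - c • G y) x = ediv F x - c * ediv G x := by
  unfold ediv
  rw [Finset.mul_sum, ← Finset.sum_sub_distrib]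
  refine Finset.sum_congr rfl fun i _ => ?_
  have h : fderiv ℝ (fun y => F y - c • G y) x
      = fderiv ℝ F x - c • fderiv ℝ G x := by
    rw [fderiv_fun_sub hF (show DifferentiableAt ℝ (fun y => c • G y) x from hG.const_smul c),
      fderiv_fun_const_smul hG]
  rw [h]
  simp [inner_sub_left, real_inner_smul_left, mul_comm]

lemma ediv_gradient_eq_elap (q : E → ℝ) (hq : ContDiff ℝ (⊤ : ℕ∞) q) (x : E) :
    ediv (gradient q) x = elap q x := by
  have hgrad : ContDiff ℝ (⊤ : ℕ∞) (gradient q) := by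
    have h1 : ContDiff ℝ (⊤ : ℕ∞) (fderiv ℝ q) := hq.fderiv_right (by simp)
    exact ((InnerProductSpace.toDual ℝ E).symm.contDiff).comp h1
  unfold ediv elap
  refine Finset.sum_congr rfl fun i _ => ?_
  set e := EuclideanSpace.basisFun (Fin n) ℝ i with he
  have hfun : (fun y => fderiv ℝ q y e) = fun y => (innerSL ℝ e) (gradient q y) := by
    funext y
    rw [innerSL_apply_apply, real_inner_comm, inner_gradient_eq]
  rw [hfun]
  have hcomp : fderiv ℝ (fun y => (innerSL ℝ e) (gradient q y)) x
      = (innerSL ℝ e).comp (fderiv ℝ (gradient q) x) :=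
    ((innerSL ℝ e).hasFDerivAt.comp x
      ((hgrad.differentiable (by simp) x).hasFDerivAt)).fderiv
  rw [hcomp]
  rw [ContinuousLinearMap.comp_apply, innerSL_apply_apply, real_inner_comm]

end aux

/-- Backward direction of Theorem 2.6: if the positive smooth density `p` solves
the continuity equation with drift `b`, then it solves the backward
Fokker–Planck equation with drift `b_B = b - ε • s`, where `s t = ∇ log (p t)`
is the score. -/
theorem stmt7 {n : ℕ} (p : ℝ → EuclideanSpace ℝ (Fin n) → ℝ)
    (hp : ContDiff ℝ (⊤ : ℕ∞) (Function.uncurry p))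
    (hpos : ∀ t ∈ Set.Icc (0 : ℝ) 1, ∀ x, 0 < p t x)
    (b : ℝ → EuclideanSpace ℝ (Fin n) → EuclideanSpace ℝ (Fin n))
    (hb : ContDiff ℝ (⊤ : ℕ∞) (Function.uncurry b))
    (ε : ℝ → ℝ)
    (s : ℝ → EuclideanSpace ℝ (Fin n) → EuclideanSpace ℝ (Fin n))
    (hs : ∀ t x, s t x = gradient (fun y => Real.log (p t y)) x)
    (bB : ℝ → EuclideanSpace ℝ (Fin n) → EuclideanSpace ℝ (Fin n))
    (hbB : ∀ t x, bB t x = b t x - ε t • s t x)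
    (hCE : ∀ t ∈ Set.Icc (0 : ℝ) 1, ∀ x,
      deriv (fun τ => p τ x) t + ediv (fun y => p t y • b t y) x = 0) :
    ∀ t ∈ Set.Icc (0 : ℝ) 1, ∀ x,
      deriv (fun τ => p τ x) t + ediv (fun y => p t y • bB t y) x
        = -(ε t) * elap (p t) x := by
  intro t ht x
  have hpt : ContDiff ℝ (⊤ : ℕ∞) (p t) := hp.comp (contDiff_const.prodMk contDiff_id)
  have hbt : ContDiff ℝ (⊤ : ℕ∞) (b t) := hb.comp (contDiff_const.prodMk contDiff_id)
  -- key score identity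
  have hkey : ∀ y, p t y • s t y = gradient (p t) y := by
    intro y
    have hne : p t y ≠ 0 := (hpos t ht y).ne'
    have hd : DifferentiableAt ℝ (p t) y := (hpt.differentiable (by simp)) y
    have hlog : HasFDerivAt (fun z => Real.log (p t z))
        ((p t y)⁻¹ • fderiv ℝ (p t) y) y := hd.hasFDerivAt.log hne
    rw [hs, gradient, hlog.fderiv, gradient, map_smul, smul_smul,
      mul_inv_cancel₀ hne, one_smul]
  have hfun : (fun y => p t y • bB t y)
      = fun y => (p t y • b t y) - ε t • gradient (p t) y := by
    funext y
    rw [hbB, smul_sub, smul_comm, hkey]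
  have hF : DifferentiableAt ℝ (fun y => p t y • b t y) x :=
    ((hpt.differentiable (by simp)) x).smul ((hbt.differentiable (by simp)) x)
  have hG : DifferentiableAt ℝ (gradient (p t)) x := by
    have h1 : ContDiff ℝ (⊤ : ℕ∞) (fderiv ℝ (p t)) := hpt.fderiv_right (by simp)
    exact (((InnerProductSpace.toDual ℝ _).symm.contDiff).comp h1).differentiable (by simp) x
  rw [hfun, ediv_sub_smul _ _ _ _ hF hG, ediv_gradient_eq_elap _ hpt,
    ← add_sub_assoc, hCE t ht x]
  ring
end
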